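/- Let λ : G_m → GL(V) be a one-parameter subgroup of a reductive group G ⊆ GL(V). Then the set P(λ) = {g ∈ G : lim_{t→0} λ(t) g λ(t)^{-1} exists in G} is a (parabolic) subgroup of G, the set U(λ) = {g ∈ G : lim_{t→0} λ(t) g λ(t)^{-1} = e} is a normal unipotent subgroup of P(λ), the centraliser L(λ) of λ in G is a subgroup of P(λ), and P(λ) = U(λ) ⋊ L(λ); moreover λ(G_m) is central in L(λ) and its conjugation action on Lie U(λ) has all weights strictly positive. -/
import Mathlib


open scoped MatrixGroups

/-- `ConjLimit lam g L` says `lim_{t→0} λ(t) g λ(t)⁻¹` exists and equals `L`: the conjugates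
are given by a matrix of polynomials in `t` whose value at `t = 0` is `L`. -/
def ConjLimit {k : Type*} [Field k] {N : ℕ}
    (lam : kˣ →* GL (Fin N) k) (g : GL (Fin N) k) (L : Matrix (Fin N) (Fin N) k) : Prop :=
  ∃ P : Matrix (Fin N) (Fin N) (Polynomial k),
    (∀ t : kˣ, P.map (Polynomial.eval (t : k)) =
      ((lam t * g * (lam t)⁻¹ : GL (Fin N) k) : Matrix (Fin N) (Fin N) k)) ∧
    P.map (Polynomial.eval 0) = L

namespace ConjLimitAux

open Polynomial Matrix

variable {k : Type*} [Field k] {N : ℕ}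

lemma polyEq [Infinite k] {p q : k[X]}
    (h : ∀ t : kˣ, p.eval (t : k) = q.eval (t : k)) : p = q := by
  refine p.eq_of_infinite_eval_eq q (((Set.finite_singleton (0 : k)).infinite_compl).mono ?_)
  intro x hx
  have hx0 : x ≠ 0 := by simpa using hx
  simpa using h (Units.mk0 x hx0)

variable (d : Fin N → ℤ) {lam : kˣ →* GL (Fin N) k}

/-- The value of the limit: kill all entries with `d i ≠ d j`. -/
def limMat (g : Matrix (Fin N) (Fin N) k) : Matrix (Fin N) (Fin N) k :=
  Matrix.of fun i j => if d i = d j then g i j else 0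

lemma conj_entry
    (hlam : ∀ t : kˣ, ((lam t : GL (Fin N) k) : Matrix (Fin N) (Fin N) k)
      = Matrix.diagonal fun i => (t : k) ^ d i)
    (t : kˣ) (g : GL (Fin N) k) (i j : Fin N) :
    ((lam t * g * (lam t)⁻¹ : GL (Fin N) k) : Matrix (Fin N) (Fin N) k) i j
      = (g : Matrix (Fin N) (Fin N) k) i j * (t : k) ^ (d i - d j) := by
  have h1 : ((lam t)⁻¹ : GL (Fin N) k) = lam t⁻¹ := (map_inv lam t).symm
  have h2 : ((lam t⁻¹ : GL (Fin N) k) : Matrix (Fin N) (Fin N) k)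
      = Matrix.diagonal fun i => (t : k) ^ (-d i) := by
    rw [hlam]
    refine congrArg Matrix.diagonal (funext fun i => ?_)
    rw [Units.val_inv_eq_inv_val, _root_.zpow_neg]
    exact _root_.inv_zpow _ _
  rw [Units.val_mul, Units.val_mul, hlam, h1, h2, Matrix.mul_diagonal, Matrix.diagonal_mul,
    sub_eq_add_neg, zpow_add₀ (Units.ne_zero t)]
  ring

lemma conjLimit_iff [Infinite k]
    (hlam : ∀ t : kˣ, ((lam t : GL (Fin N) k) : Matrix (Fin N) (Fin N) k)
      = Matrix.diagonal fun i => (t : k) ^ d i)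
    (g : GL (Fin N) k) (L : Matrix (Fin N) (Fin N) k) :
    ConjLimit lam g L ↔
      ((∀ i j, d i < d j → (g : Matrix (Fin N) (Fin N) k) i j = 0) ∧
        L = limMat d (g : Matrix (Fin N) (Fin N) k)) := by
  set gm : Matrix (Fin N) (Fin N) k := (g : Matrix (Fin N) (Fin N) k) with hgm
  have hg2 : ∀ i j, (g : Matrix (Fin N) (Fin N) k) i j = gm i j := fun _ _ => rfl
  constructor
  · rintro ⟨P, hP, hP0⟩
    have hent : ∀ (t : kˣ) (i j : Fin N),
        (P i j).eval (t : k) = gm i j * (t : k) ^ (d i - d j) := by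
      intro t i j
      have := congrFun (congrFun (hP t) i) j
      rw [Matrix.map_apply] at this
      rw [this, conj_entry d hlam, hg2]
    have key : ∀ i j : Fin N,
        (d i < d j → gm i j = 0) ∧
        P i j = if d j ≤ d i then C (gm i j) * X ^ (d i - d j).toNat else 0 := by
      intro i j
      by_cases hle : d j ≤ d i
      · have hpe : P i j = C (gm i j) * X ^ (d i - d j).toNat := by
          apply polyEq
          intro t
          rw [hent t i j]
          have : ((t : k)) ^ (d i - d j) = (t : k) ^ ((d i - d j).toNat : ℕ) := by
            rw [← zpow_natCast, Int.toNat_of_nonneg (sub_nonneg.2 hle)]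
          simp [this]
        exact ⟨fun hlt => absurd hle (not_le.2 hlt), by rw [hpe, if_pos hle]⟩
      · have hlt : d i < d j := not_le.1 hle
        set m : ℕ := (d j - d i).toNat with hm
        have hmpos : 0 < m := by
          rw [hm]
          omega
        have hq : P i j * X ^ m = C (gm i j) := by
          apply polyEq
          intro t
          rw [eval_mul, hent t i j, eval_pow, eval_X, eval_C]
          have hpow : (t : k) ^ (m : ℕ) = (t : k) ^ (d j - d i) := by
            rw [← zpow_natCast, hm, Int.toNat_of_nonneg (by omega)]
          rw [hpow, mul_assoc, ← zpow_add₀ (Units.ne_zero t)]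
          have : d i - d j + (d j - d i) = 0 := by ring
          rw [this, zpow_zero, mul_one]
        have hz : gm i j = 0 := by
          have := congrArg (Polynomial.eval (0 : k)) hq
          rw [eval_mul, eval_pow, eval_X, eval_C, zero_pow hmpos.ne',
            mul_zero] at this
          exact this.symm
        have hp0 : P i j = 0 := by
          have := hq
          rw [hz, map_zero] at this
          rcases mul_eq_zero.1 this with h | h
          · exact h
          · exact absurd h (pow_ne_zero _ X_ne_zero)
        exact ⟨fun _ => hz, by rw [hp0, if_neg hle]⟩
    constructor
    · exact fun i j h => (key i j).1 h
    · rw [← hP0]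
      ext i j
      rw [Matrix.map_apply, (key i j).2, limMat, Matrix.of_apply]
      by_cases hle : d j ≤ d i
      · rw [if_pos hle, eval_mul, eval_C, eval_pow, eval_X]
        by_cases heq : d i = d j
        · rw [if_pos heq]
          have : (d i - d j).toNat = 0 := by omega
          rw [this, pow_zero, mul_one]
        · rw [if_neg heq]
          have : (d i - d j).toNat ≠ 0 := by omega
          rw [zero_pow this, mul_zero]
      · have heq : ¬ d i = d j := by omega
        rw [if_neg hle, if_neg heq, eval_zero]
  · rintro ⟨hup, hL⟩
    refine ⟨Matrix.of fun i j =>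
      if d j ≤ d i then C (gm i j) * X ^ (d i - d j).toNat else 0, ?_, ?_⟩
    · intro t
      ext i j
      rw [Matrix.map_apply, Matrix.of_apply, conj_entry d hlam, hg2]
      by_cases hle : d j ≤ d i
      · rw [if_pos hle, eval_mul, eval_C, eval_pow, eval_X]
        congr 1
        rw [← zpow_natCast, Int.toNat_of_nonneg (sub_nonneg.2 hle)]
      · rw [if_neg hle, eval_zero, hup i j (not_le.1 hle), zero_mul]
    · rw [hL]
      ext i j
      rw [Matrix.map_apply, Matrix.of_apply, limMat, Matrix.of_apply]
      by_cases hle : d j ≤ d i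
      · rw [if_pos hle, eval_mul, eval_C, eval_pow, eval_X]
        by_cases heq : d i = d j
        · rw [if_pos heq]
          have : (d i - d j).toNat = 0 := by omega
          rw [this, pow_zero, mul_one]
        · rw [if_neg heq]
          have : (d i - d j).toNat ≠ 0 := by omega
          rw [zero_pow this, mul_zero]
      · have heq : ¬ d i = d j := by omega
        rw [if_neg hle, if_neg heq, eval_zero]

lemma conjLimit_det [Infinite k] {g : GL (Fin N) k} {L : Matrix (Fin N) (Fin N) k}
    (h : ConjLimit lam g L) : L.det = (g : Matrix (Fin N) (Fin N) k).det := by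
  obtain ⟨P, hP, hP0⟩ := h
  have hdet : P.det = C ((g : Matrix (Fin N) (Fin N) k).det) := by
    apply polyEq
    intro t
    have h1 := (Polynomial.evalRingHom ((t : k))).map_det P
    simp only [RingHom.mapMatrix_apply, coe_evalRingHom] at h1
    rw [eval_C, h1, hP t, Units.val_mul, Units.val_mul]
    exact Matrix.det_units_conj (lam t) _
  have h1 := (Polynomial.evalRingHom ((0 : k))).map_det P
  simp only [RingHom.mapMatrix_apply, coe_evalRingHom] at h1
  rw [← hP0, ← h1, hdet, eval_C]

lemma conjLimit_mul {g h : GL (Fin N) k} {L M : Matrix (Fin N) (Fin N) k}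
    (hg : ConjLimit lam g L) (hh : ConjLimit lam h M) :
    ConjLimit lam (g * h) (L * M) := by
  obtain ⟨P, hP, hP0⟩ := hg
  obtain ⟨Q, hQ, hQ0⟩ := hh
  refine ⟨P * Q, ?_, ?_⟩
  · intro t
    have hmap : (P * Q).map (Polynomial.eval (t : k))
        = P.map (Polynomial.eval (t : k)) * Q.map (Polynomial.eval (t : k)) :=
      Matrix.map_mul (f := Polynomial.evalRingHom ((t : k)))
    rw [hmap, hP t, hQ t, ← Units.val_mul]
    congr 1
    group
  · have hmap : (P * Q).map (Polynomial.eval (0 : k))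
        = P.map (Polynomial.eval (0 : k)) * Q.map (Polynomial.eval (0 : k)) :=
      Matrix.map_mul (f := Polynomial.evalRingHom ((0 : k)))
    rw [hmap, hP0, hQ0]

lemma conjLimit_inv {g : GL (Fin N) k} {L : Matrix (Fin N) (Fin N) k}
    (hg : ConjLimit lam g L) :
    ConjLimit lam g⁻¹ (((g : Matrix (Fin N) (Fin N) k).det)⁻¹ • L.adjugate) := by
  obtain ⟨P, hP, hP0⟩ := hg
  set gm : Matrix (Fin N) (Fin N) k := (g : Matrix (Fin N) (Fin N) k) with hgm
  have hdet : ∀ t : kˣ,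
      ((lam t * g * (lam t)⁻¹ : GL (Fin N) k) : Matrix (Fin N) (Fin N) k).det = gm.det := by
    intro t
    rw [Units.val_mul, Units.val_mul]
    exact Matrix.det_units_conj (lam t) _
  have hmapsmul : ∀ (a : k) (M : Matrix (Fin N) (Fin N) k[X]),
      ((C ((gm.det)⁻¹)) • M).map (Polynomial.eval a)
        = (gm.det)⁻¹ • M.map (Polynomial.eval a) := by
    intro a M
    ext i j
    rw [Matrix.map_apply, Matrix.smul_apply, Matrix.smul_apply, smul_eq_mul, smul_eq_mul,
      eval_mul, eval_C, Matrix.map_apply]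
  have hmapadj : ∀ (a : k),
      P.adjugate.map (Polynomial.eval a) = (P.map (Polynomial.eval a)).adjugate := by
    intro a
    have := (Polynomial.evalRingHom a).map_adjugate P
    simp only [RingHom.mapMatrix_apply, coe_evalRingHom] at this
    exact this
  refine ⟨(C ((gm.det)⁻¹)) • P.adjugate, ?_, ?_⟩
  · intro t
    rw [hmapsmul, hmapadj, hP t]
    have h1 : (lam t * g⁻¹ * (lam t)⁻¹ : GL (Fin N) k)
        = (lam t * g * (lam t)⁻¹ : GL (Fin N) k)⁻¹ := by group
    rw [h1, Matrix.coe_units_inv, Matrix.inv_def, hdet t, Ring.inverse_eq_inv]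
  · rw [hmapsmul, hmapadj, hP0]

lemma conjLimit_central
    {g : GL (Fin N) k} (hg : ∀ t, lam t * g = g * lam t) :
    ConjLimit lam g (g : Matrix (Fin N) (Fin N) k) := by
  refine ⟨(g : Matrix (Fin N) (Fin N) k).map C, ?_, ?_⟩
  · intro t
    have h1 : (lam t * g * (lam t)⁻¹ : GL (Fin N) k) = g := by
      rw [hg t, mul_inv_cancel_right]
    rw [h1]
    ext i j
    rw [Matrix.map_apply, Matrix.map_apply, eval_C]
  · ext i j
    rw [Matrix.map_apply, Matrix.map_apply, eval_C]

end ConjLimitAux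

/-- **The parabolic subgroup `P(λ)` associated to a one-parameter subgroup.**
Let `λ : 𝔾ₘ → G = GL(V)` be a one-parameter subgroup (diagonal with integer weights `d` in a
suitable basis).  Set `P(λ) = {g : lim_{t→0} λ(t) g λ(t)⁻¹ exists in G}`,
`U(λ) = {g : lim_{t→0} λ(t) g λ(t)⁻¹ = e}` and let `L(λ)` be the centraliser of `λ`.  Then
`P(λ)` is a subgroup, `U(λ)` is a normal unipotent subgroup of `P(λ)`, `L(λ) ≤ P(λ)`,
`P(λ) = U(λ) ⋊ L(λ)` (existence and uniqueness of the decomposition `p = u·l`), `λ(𝔾ₘ)` is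
central in `L(λ)`, and the conjugation action of `λ` on `U(λ)` has all weights strictly
positive (the limit of `λ(t) u λ(t)⁻¹` as `t → 0` is the identity). -/
theorem parabolic_of_one_parameter_subgroup
    {k : Type*} [Field k] [IsAlgClosed k] [CharZero k] {N : ℕ}
    (d : Fin N → ℤ) (lam : kˣ →* GL (Fin N) k)
    (hlam : ∀ t : kˣ, ((lam t : GL (Fin N) k) : Matrix (Fin N) (Fin N) k)
      = Matrix.diagonal fun i => (t : k) ^ d i) :
    -- `P(λ)` is a subgroup of `G`
    ((∃ L, ConjLimit lam (1 : GL (Fin N) k) L) ∧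
      (∀ g h : GL (Fin N) k, (∃ L, ConjLimit lam g L) → (∃ L, ConjLimit lam h L) →
        ∃ L, ConjLimit lam (g * h) L) ∧
      (∀ g : GL (Fin N) k, (∃ L, ConjLimit lam g L) → ∃ L, ConjLimit lam g⁻¹ L)) ∧
    -- `U(λ)` is a subgroup, normal in `P(λ)`, and unipotent
    (ConjLimit lam (1 : GL (Fin N) k) 1 ∧
      (∀ g h : GL (Fin N) k, ConjLimit lam g 1 → ConjLimit lam h 1 →
        ConjLimit lam (g * h) 1) ∧
      (∀ g : GL (Fin N) k, ConjLimit lam g 1 → ConjLimit lam g⁻¹ 1) ∧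
      (∀ p u : GL (Fin N) k, (∃ L, ConjLimit lam p L) → ConjLimit lam u 1 →
        ConjLimit lam (p * u * p⁻¹) 1) ∧
      (∀ u : GL (Fin N) k, ConjLimit lam u 1 →
        IsNilpotent ((u : Matrix (Fin N) (Fin N) k) - 1))) ∧
    -- the centraliser `L(λ)` is contained in `P(λ)`
    (∀ g : GL (Fin N) k, (∀ t, lam t * g = g * lam t) → ∃ L, ConjLimit lam g L) ∧
    -- `P(λ) = U(λ) ⋊ L(λ)`: unique decomposition `p = u · l`
    (∀ p : GL (Fin N) k, (∃ L, ConjLimit lam p L) →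
      ∃ u l : GL (Fin N) k, ConjLimit lam u 1 ∧ (∀ t, lam t * l = l * lam t) ∧ p = u * l ∧
        ∀ u' l' : GL (Fin N) k, ConjLimit lam u' 1 → (∀ t, lam t * l' = l' * lam t) →
          p = u' * l' → u' = u ∧ l' = l) ∧
    -- `U(λ) ∩ L(λ) = {e}`
    (∀ g : GL (Fin N) k, ConjLimit lam g 1 → (∀ t, lam t * g = g * lam t) → g = 1) ∧
    -- `λ(𝔾ₘ)` is central in `L(λ)`
    (∀ t : kˣ, ∀ g : GL (Fin N) k, (∀ s, lam s * g = g * lam s) →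
      lam t * g = g * lam t) := by
  classical
  open ConjLimitAux Polynomial Matrix in
  -- uniqueness of limits
  have huniq : ∀ (g : GL (Fin N) k) (L L' : Matrix (Fin N) (Fin N) k),
      ConjLimit lam g L → ConjLimit lam g L' → L = L' := by
    intro g L L' h1 h2
    rw [ConjLimitAux.conjLimit_iff d hlam] at h1 h2
    rw [h1.2, h2.2]
  have detne : ∀ g : GL (Fin N) k, ((g : Matrix (Fin N) (Fin N) k)).det ≠ 0 := fun g =>
    ((Matrix.isUnit_iff_isUnit_det _).mp g.isUnit).ne_zero
  have hone : ConjLimit lam (1 : GL (Fin N) k) 1 := by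
    rw [ConjLimitAux.conjLimit_iff d hlam]
    refine ⟨fun i j hij => ?_, ?_⟩
    · have hne : i ≠ j := fun h => by subst h; exact lt_irrefl _ hij
      simp [Matrix.one_apply_ne hne]
    · ext i j
      by_cases hij : d i = d j
      · simp [ConjLimitAux.limMat, hij]
      · have hne : i ≠ j := fun h => hij (by rw [h])
        simp [ConjLimitAux.limMat, hij, Matrix.one_apply_ne hne]
  have hUdet : ∀ g : GL (Fin N) k, ConjLimit lam g 1 →
      ((g : Matrix (Fin N) (Fin N) k)).det = 1 := by
    intro g hg
    have h := ConjLimitAux.conjLimit_det hg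
    rw [Matrix.det_one] at h
    exact h.symm
  have hUinv : ∀ g : GL (Fin N) k, ConjLimit lam g 1 → ConjLimit lam g⁻¹ 1 := by
    intro g hg
    have h1 := ConjLimitAux.conjLimit_inv hg
    rwa [hUdet g hg, inv_one, Matrix.adjugate_one, one_smul] at h1
  have hUmul : ∀ g h : GL (Fin N) k, ConjLimit lam g 1 → ConjLimit lam h 1 →
      ConjLimit lam (g * h) 1 := by
    intro g h hg hh
    have := ConjLimitAux.conjLimit_mul hg hh
    rwa [one_mul] at this
  have hnorm : ∀ p u : GL (Fin N) k, (∃ L, ConjLimit lam p L) → ConjLimit lam u 1 →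
      ConjLimit lam (p * u * p⁻¹) 1 := by
    rintro p u ⟨Lp, hLp⟩ hu
    have h1 := ConjLimitAux.conjLimit_inv hLp
    have h2 := ConjLimitAux.conjLimit_mul (ConjLimitAux.conjLimit_mul hLp hu) h1
    have hD : Lp.det = ((p : Matrix (Fin N) (Fin N) k)).det := ConjLimitAux.conjLimit_det hLp
    have h3 : Lp * 1 * ((((p : Matrix (Fin N) (Fin N) k)).det)⁻¹ • Lp.adjugate) = 1 := by
      rw [mul_one, mul_smul_comm, Matrix.mul_adjugate, hD, smul_smul,
        inv_mul_cancel₀ (detne p), one_smul]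
    rwa [h3] at h2
  have hunip : ∀ u : GL (Fin N) k, ConjLimit lam u 1 →
      IsNilpotent ((u : Matrix (Fin N) (Fin N) k) - 1) := by
    intro u hu
    rw [ConjLimitAux.conjLimit_iff d hlam] at hu
    obtain ⟨h1, h2⟩ := hu
    have hM : ∀ i j, d i ≤ d j → ((u : Matrix (Fin N) (Fin N) k) - 1) i j = 0 := by
      intro i j hle
      rcases lt_or_eq_of_le hle with hlt | heq
      · have hne : i ≠ j := fun h => by subst h; exact lt_irrefl _ hlt
        simp [Matrix.sub_apply, h1 i j hlt, Matrix.one_apply_ne hne]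
      · have h3 := congrFun (congrFun h2 i) j
        rw [ConjLimitAux.limMat, Matrix.of_apply, if_pos heq] at h3
        rw [Matrix.sub_apply, ← h3, sub_self]
    have key : ∀ m : ℕ, ∀ i j,
        ((((u : Matrix (Fin N) (Fin N) k) - 1) ^ m) i j ≠ 0) → d j + m ≤ d i := by
      intro m
      induction m with
      | zero =>
        intro i j h
        rw [pow_zero] at h
        have hij : i = j := by
          by_contra hne
          exact h (Matrix.one_apply_ne hne)
        subst hij
        simp
      | succ m ih =>
        intro i j h
        rw [pow_succ, Matrix.mul_apply] at h
        obtain ⟨l, -, hl⟩ := Finset.exists_ne_zero_of_sum_ne_zero h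
        have ha := ih i l (left_ne_zero_of_mul hl)
        have hb : d j < d l := by
          by_contra hc
          exact (right_ne_zero_of_mul hl) (hM l j (not_lt.1 hc))
        omega
    refine ⟨2 * ∑ i, (d i).natAbs + 1, ?_⟩
    ext i j
    simp only [Matrix.zero_apply]
    by_contra h
    have hk := key _ i j h
    have hi : (d i).natAbs ≤ ∑ i, (d i).natAbs :=
      Finset.single_le_sum (f := fun i => (d i).natAbs) (fun _ _ => Nat.zero_le _)
        (Finset.mem_univ i)
    have hj : (d j).natAbs ≤ ∑ i, (d i).natAbs :=
      Finset.single_le_sum (f := fun i => (d i).natAbs) (fun _ _ => Nat.zero_le _)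
        (Finset.mem_univ j)
    omega
  have hdecomp : ∀ p : GL (Fin N) k, (∃ L, ConjLimit lam p L) →
      ∃ u l : GL (Fin N) k, ConjLimit lam u 1 ∧ (∀ t, lam t * l = l * lam t) ∧ p = u * l ∧
        ∀ u' l' : GL (Fin N) k, ConjLimit lam u' 1 → (∀ t, lam t * l' = l' * lam t) →
          p = u' * l' → u' = u ∧ l' = l := by
    rintro p ⟨L, hL⟩
    have hLval : L = ConjLimitAux.limMat d (p : Matrix (Fin N) (Fin N) k) :=
      ((ConjLimitAux.conjLimit_iff d hlam p L).mp hL).2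
    have hdetL : L.det = ((p : Matrix (Fin N) (Fin N) k)).det := ConjLimitAux.conjLimit_det hL
    have hLu : IsUnit L := by
      rw [Matrix.isUnit_iff_isUnit_det, hdetL]
      exact (Matrix.isUnit_iff_isUnit_det _).mp p.isUnit
    set l : GL (Fin N) k := hLu.unit with hldef
    have hlval : (l : Matrix (Fin N) (Fin N) k) = L := hLu.unit_spec
    have hcomm : ∀ t, lam t * l = l * lam t := by
      intro t
      apply Units.ext
      rw [Units.val_mul, Units.val_mul, hlval, hlam t]
      ext i j
      rw [Matrix.diagonal_mul, Matrix.mul_diagonal]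
      by_cases hij : d i = d j
      · rw [hij]; ring
      · have hz : L i j = 0 := by
          rw [hLval]; exact if_neg hij
        rw [hz, mul_zero, zero_mul]
    have hlinvc : ∀ t, lam t * l⁻¹ = l⁻¹ * lam t := by
      intro t
      have hct : Commute (lam t) l := hcomm t
      exact hct.inv_right
    have hul : ConjLimit lam (p * l⁻¹) 1 := by
      have h2 := ConjLimitAux.conjLimit_central hlinvc
      have h3 := ConjLimitAux.conjLimit_mul hL h2
      have h4 : L * ((l⁻¹ : GL (Fin N) k) : Matrix (Fin N) (Fin N) k) = 1 := by
        rw [← hlval, ← Units.val_mul, mul_inv_cancel, Units.val_one]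
      rwa [h4] at h3
    refine ⟨p * l⁻¹, l, hul, hcomm, (inv_mul_cancel_right p l).symm, ?_⟩
    intro u' l' hu' hl' hp'
    have hl'lim : ConjLimit lam p (l' : Matrix (Fin N) (Fin N) k) := by
      rw [hp']
      have := ConjLimitAux.conjLimit_mul hu' (ConjLimitAux.conjLimit_central hl')
      rwa [one_mul] at this
    have hLL : (l' : Matrix (Fin N) (Fin N) k) = L := huniq p _ _ hl'lim hL
    have hll : l' = l := Units.ext (by rw [hLL, hlval])
    refine ⟨?_, hll⟩
    rw [hp', hll]
    exact (mul_inv_cancel_right u' l).symm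
  have hUL : ∀ g : GL (Fin N) k, ConjLimit lam g 1 → (∀ t, lam t * g = g * lam t) → g = 1 := by
    intro g h1 hc
    have h2 := ConjLimitAux.conjLimit_central hc
    have h3 := huniq g _ _ h1 h2
    apply Units.ext
    rw [Units.val_one, h3]
  exact ⟨⟨⟨1, hone⟩,
      fun g h hg hh => by
        obtain ⟨Lg, hg⟩ := hg
        obtain ⟨Lh, hh⟩ := hh
        exact ⟨_, ConjLimitAux.conjLimit_mul hg hh⟩,
      fun g hg => by
        obtain ⟨Lg, hg⟩ := hg
        exact ⟨_, ConjLimitAux.conjLimit_inv hg⟩⟩,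
    ⟨hone, hUmul, hUinv, hnorm, hunip⟩,
    fun g hg => ⟨_, ConjLimitAux.conjLimit_central hg⟩,
    hdecomp, hUL, fun t g h => h t⟩
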